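/- Let 𝒜 be a unital C*-algebra, τ₁ and τ₂ be states on 𝒜, and f, g : ℝ → ℝ be continuous synchronous functions. Then for all self-adjoint elements A, B of 𝒜, τ₂(f(A)g(A)) + f(τ₁(B))·g(τ₁(B)) ≥ τ₂(f(A))·g(τ₁(B)) + f(τ₁(B))·τ₂(g(A)), where τ₁(B) denotes the (real) value of the state τ₁ at the self-adjoint element B. -/

import Mathlib

open scoped ComplexOrder

/-! Fix `c = τ₁(B)`. Synchronicity says the function `t ↦ (f t - f c) (g t - g c)` is nonnegative,
so its functional calculus at `A` is a positive element and `τ₂` of it has nonnegative real part;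
expanding the product by linearity of `τ₂` and `τ₂(1) = 1` gives the inequality. -/

theorem cfc_sub_const_mul_sub_const {𝒜 : Type*} [CStarAlgebra 𝒜] (f g : ℝ → ℝ) (a b : ℝ)
    (A : 𝒜) (hf : ContinuousOn f (spectrum ℝ A)) (hg : ContinuousOn g (spectrum ℝ A))
    (hA : IsSelfAdjoint A) :
    cfc (fun t => (f t - a) * (g t - b)) A =
      (cfc f A - algebraMap ℝ 𝒜 a) * (cfc g A - algebraMap ℝ 𝒜 b) := by
  rw [cfc_mul (fun t => f t - a) (fun t => g t - b) A (hf.sub continuousOn_const)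
      (hg.sub continuousOn_const), cfc_sub f _ A, cfc_sub g _ A, cfc_const a A, cfc_const b A]

theorem LinearMap.re_apply_sub_algebraMap_mul_sub_algebraMap {𝒜 : Type*} [Ring 𝒜]
    [Algebra ℂ 𝒜] [Algebra ℝ 𝒜] [IsScalarTower ℝ ℂ 𝒜] (φ : 𝒜 →ₗ[ℂ] ℂ) (hφ : φ 1 = 1)
    (x y : 𝒜) (a b : ℝ) :
    (φ ((x - algebraMap ℝ 𝒜 a) * (y - algebraMap ℝ 𝒜 b))).re =
      (φ (x * y)).re - (φ x).re * b - a * (φ y).re + a * b := by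
  simp only [Algebra.algebraMap_eq_smul_one, sub_mul, mul_sub, smul_mul_assoc, mul_smul_comm,
    one_mul, mul_one, map_sub, LinearMap.map_smul_of_tower, hφ, Complex.sub_re,
    Complex.real_smul, Complex.mul_re, Complex.ofReal_re, Complex.ofReal_im]
  ring

theorem chebyshev_state_of_sub_mul_sub_nonneg {𝒜 : Type*} [CStarAlgebra 𝒜] [PartialOrder 𝒜]
    [StarOrderedRing 𝒜] (φ : 𝒜 →ₗ[ℂ] ℂ) (hφone : φ 1 = 1) (hφpos : ∀ x : 𝒜, 0 ≤ x → 0 ≤ φ x)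
    (f g : ℝ → ℝ) (a b : ℝ) (A : 𝒜) (hf : ContinuousOn f (spectrum ℝ A))
    (hg : ContinuousOn g (spectrum ℝ A)) (hfg : ∀ t ∈ spectrum ℝ A, 0 ≤ (f t - a) * (g t - b))
    (hA : IsSelfAdjoint A) :
    (φ (cfc f A * cfc g A)).re + a * b ≥ (φ (cfc f A)).re * b + a * (φ (cfc g A)).re := by
  have hnonneg : 0 ≤ cfc (fun t => (f t - a) * (g t - b)) A := cfc_nonneg hfg
  rw [cfc_sub_const_mul_sub_const f g a b A hf hg hA] at hnonneg
  have hre := (Complex.le_def.mp (hφpos _ hnonneg)).1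
  rw [φ.re_apply_sub_algebraMap_mul_sub_algebraMap hφone] at hre
  simp only [Complex.zero_re] at hre
  linarith

theorem chebyshev_two_states_sync_general {𝒜 : Type*} [CStarAlgebra 𝒜] [PartialOrder 𝒜]
    [StarOrderedRing 𝒜] (τ₁ τ₂ : 𝒜 →ₗ[ℂ] ℂ) (hτ₂one : τ₂ 1 = 1)
    (hτ₂pos : ∀ a : 𝒜, 0 ≤ a → 0 ≤ τ₂ a)
    (f g : ℝ → ℝ) (hfc : Continuous f) (hgc : Continuous g)
    (hsync : ∀ s t : ℝ, 0 ≤ (f t - f s) * (g t - g s))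
    (A B : 𝒜) (hA : IsSelfAdjoint A) :
    (τ₂ (cfc f A * cfc g A)).re + f ((τ₁ B).re) * g ((τ₁ B).re) ≥
      (τ₂ (cfc f A)).re * g ((τ₁ B).re) + f ((τ₁ B).re) * (τ₂ (cfc g A)).re :=
  chebyshev_state_of_sub_mul_sub_nonneg τ₂ hτ₂one hτ₂pos f g _ _ A hfc.continuousOn
    hgc.continuousOn (fun t _ => hsync _ t) hA

/-- Chebyshev type inequality for two states and synchronous functions on `ℝ`:
`τ₂(f(A)g(A)) + f(τ₁(B))g(τ₁(B)) ≥ τ₂(f(A))g(τ₁(B)) + f(τ₁(B))τ₂(g(A))`. -/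
theorem chebyshev_two_states_sync {𝒜 : Type*} [CStarAlgebra 𝒜] [PartialOrder 𝒜]
    [StarOrderedRing 𝒜] (τ₁ τ₂ : 𝒜 →ₗ[ℂ] ℂ) (hτ₁one : τ₁ 1 = 1) (hτ₂one : τ₂ 1 = 1)
    (hτ₁pos : ∀ a : 𝒜, 0 ≤ a → 0 ≤ τ₁ a) (hτ₂pos : ∀ a : 𝒜, 0 ≤ a → 0 ≤ τ₂ a)
    (f g : ℝ → ℝ) (hfc : Continuous f) (hgc : Continuous g)
    (hsync : ∀ s t : ℝ, 0 ≤ (f t - f s) * (g t - g s))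
    (A B : 𝒜) (hA : IsSelfAdjoint A) (hB : IsSelfAdjoint B) :
    (τ₂ (cfc f A * cfc g A)).re + f ((τ₁ B).re) * g ((τ₁ B).re) ≥
      (τ₂ (cfc f A)).re * g ((τ₁ B).re) + f ((τ₁ B).re) * (τ₂ (cfc g A)).re :=
  chebyshev_two_states_sync_general τ₁ τ₂ hτ₂one hτ₂pos f g hfc hgc hsync A B hA
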